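/- arXiv:1409.1175 — 4 statements merged into one kernel-verified Lean document; each statement's English description precedes it below -/
import Mathlib

section
/- The two-dimensional Fourier transform of the spread payoff P(x1, x2) = max(e^{x1} − e^{x2} − 1, 0), computed along the shifted contour u = (u1 + iε1, u2 + iε2) with ε2 > 0 and ε1 + ε2 < −1, equals Γ(i(u1+u2) − 1) Γ(−i u2) / Γ(i u1 + 1), where Γ is the complex Gamma function. -/
/-!
With `a = -i z₁` and `b = -i z₂` the integrand is `e^{a x₁ + b x₂} (e^{x₁} - e^{x₂} - 1)_+`.
Integrating first in `x₁`, this is a call on `e^{x₁}` with strike `K = 1 + e^{x₂}`, whose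
transform is `K^{a+1} / (a (a + 1))`. What remains is `∫ e^{b x₂} (1 + e^{x₂})^{a+1} dx₂`,
which the substitution `w = σ(x₂)` (the logistic sigmoid) turns into the Beta integral
`B(b, -1 - a - b)`; the functional equation of `Γ` then absorbs the factor `a (a + 1)`.
Absolute integrability follows from the same computation with `a, b` replaced by their real
parts.
-/

open Complex MeasureTheory Set

lemma exp_mul_posPart_exp_sub_exp_eq_indicator (a : ℂ) (k : ℝ) :
    (fun x : ℝ => exp (a * x) * (max (Real.exp x - Real.exp k) 0 : ℝ)) =
      (Ioi k).indicator fun x : ℝ => exp ((a + 1) * x) - exp k * exp (a * x) := by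
  ext x
  by_cases hx : x ∈ Ioi k
  · have hk : Real.exp k < Real.exp x := Real.exp_lt_exp.mpr hx.out
    rw [indicator_of_mem hx, max_eq_left (by linarith)]
    push_cast
    rw [add_mul, one_mul, exp_add]
    ring
  · have hk : Real.exp x ≤ Real.exp k := Real.exp_le_exp.mpr (not_lt.mp hx)
    rw [indicator_of_notMem hx, max_eq_right (by linarith)]
    simp

lemma integrable_exp_mul_posPart_exp_sub_exp {a : ℂ} (ha : a.re < -1) (k : ℝ) :
    Integrable fun x : ℝ => exp (a * x) * (max (Real.exp x - Real.exp k) 0 : ℝ) := by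
  rw [exp_mul_posPart_exp_sub_exp_eq_indicator, integrable_indicator_iff measurableSet_Ioi]
  exact (integrableOn_exp_mul_complex_Ioi (by simp; linarith) k).sub
    ((integrableOn_exp_mul_complex_Ioi (by linarith) k).const_mul _)

lemma integral_exp_mul_posPart_exp_sub_exp {a : ℂ} (ha : a.re < -1) (k : ℝ) :
    ∫ x : ℝ, exp (a * x) * (max (Real.exp x - Real.exp k) 0 : ℝ)
      = exp ((a + 1) * k) / (a * (a + 1)) := by
  have ha₀ : a ≠ 0 := by rintro rfl; norm_num at ha
  have ha₁ : a + 1 ≠ 0 := by intro h; have := congrArg re h; simp at this; linarith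
  rw [exp_mul_posPart_exp_sub_exp_eq_indicator, integral_indicator measurableSet_Ioi,
    integral_sub (integrableOn_exp_mul_complex_Ioi (by simp; linarith) k)
      ((integrableOn_exp_mul_complex_Ioi (by linarith) k).const_mul _),
    integral_const_mul, integral_exp_mul_complex_Ioi (by simp; linarith),
    integral_exp_mul_complex_Ioi (by linarith), add_mul, one_mul, exp_add]
  field_simp
  ring

section

variable {E : Type*} [NormedAddCommGroup E] [NormedSpace ℝ E]

theorem integral_comp_sigmoid (g : ℝ → E) :
    ∫ y, (Real.sigmoid y * (1 - Real.sigmoid y)) • g (Real.sigmoid y)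
      = ∫ w in Ioo 0 1, g w := by
  rw [← Real.range_sigmoid, ← image_univ, integral_image_eq_integral_abs_deriv_smul
    MeasurableSet.univ (fun y _ => (Real.hasDerivAt_sigmoid y).hasDerivWithinAt)
    Real.sigmoid_injective.injOn, setIntegral_univ]
  congr! 3 with y
  exact (abs_of_pos (mul_pos (Real.sigmoid_pos y) (sub_pos.mpr (Real.sigmoid_lt_one y)))).symm

theorem integrable_comp_sigmoid_iff (g : ℝ → E) :
    Integrable (fun y => (Real.sigmoid y * (1 - Real.sigmoid y)) • g (Real.sigmoid y)) ↔
      IntegrableOn g (Ioo 0 1) := by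
  rw [← Real.range_sigmoid, ← image_univ, integrableOn_image_iff_integrableOn_abs_deriv_smul
    MeasurableSet.univ (fun y _ => (Real.hasDerivAt_sigmoid y).hasDerivWithinAt)
    Real.sigmoid_injective.injOn, integrableOn_univ]
  congr! 3 with y
  exact (abs_of_pos (mul_pos (Real.sigmoid_pos y) (sub_pos.mpr (Real.sigmoid_lt_one y)))).symm

end

lemma Real.sigmoid_eq_exp (y : ℝ) :
    Real.sigmoid y = Real.exp (y - Real.log (1 + Real.exp y)) := by
  rw [Real.exp_sub, Real.exp_log (by positivity), Real.sigmoid_def, Real.exp_neg]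
  field_simp
  ring

lemma Real.one_sub_sigmoid_eq_exp (y : ℝ) :
    1 - Real.sigmoid y = Real.exp (-Real.log (1 + Real.exp y)) := by
  rw [Real.exp_neg, Real.exp_log (by positivity), Real.sigmoid_def, Real.exp_neg]
  field_simp
  ring

lemma Complex.ofReal_exp_cpow (r : ℝ) (z : ℂ) : (Real.exp r : ℂ) ^ z = exp (r * z) := by
  rw [cpow_def_of_ne_zero (by exact_mod_cast (Real.exp_pos r).ne'),
    ← ofReal_log (Real.exp_pos r).le, Real.log_exp]

lemma sigmoid_smul_betaIntegrand (s t : ℂ) (y : ℝ) :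
    (Real.sigmoid y * (1 - Real.sigmoid y)) •
        ((Real.sigmoid y : ℂ) ^ (s - 1) * (1 - (Real.sigmoid y : ℂ)) ^ (t - 1))
      = exp (s * y - (s + t) * Real.log (1 + Real.exp y)) := by
  rw [← ofReal_one, ← ofReal_sub, Real.one_sub_sigmoid_eq_exp, Real.sigmoid_eq_exp,
    ofReal_exp_cpow, ofReal_exp_cpow, real_smul, ofReal_mul, ofReal_exp, ofReal_exp,
    ← exp_add, ← exp_add, ← exp_add]
  push_cast
  ring_nf

theorem integrable_exp_mul_sub_mul_log_one_add_exp {s t : ℂ} (hs : 0 < s.re) (ht : 0 < t.re) :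
    Integrable fun y : ℝ => exp (s * y - (s + t) * Real.log (1 + Real.exp y)) := by
  have h := (integrable_comp_sigmoid_iff _).mpr
    (((intervalIntegrable_iff_integrableOn_Ioc_of_le zero_le_one).mp
      (betaIntegral_convergent hs ht)).mono_set Ioo_subset_Ioc_self)
  simpa only [sigmoid_smul_betaIntegrand] using h

theorem integral_exp_mul_sub_mul_log_one_add_exp (s t : ℂ) :
    ∫ y : ℝ, exp (s * y - (s + t) * Real.log (1 + Real.exp y)) = betaIntegral s t := by
  rw [betaIntegral, intervalIntegral.integral_of_le zero_le_one, integral_Ioc_eq_integral_Ioo,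
    ← integral_comp_sigmoid]
  simp_rw [sigmoid_smul_betaIntegrand]

noncomputable def spreadIntegrand (a b : ℂ) (p : ℝ × ℝ) : ℂ :=
  exp (a * p.1 + b * p.2) * (max (Real.exp p.1 - Real.exp p.2 - 1) 0 : ℝ)

lemma spreadIntegrand_eq (a b : ℂ) (x y : ℝ) :
    spreadIntegrand a b (x, y) = exp (b * y) *
      (exp (a * x) * (max (Real.exp x - Real.exp (Real.log (1 + Real.exp y))) 0 : ℝ)) := by
  rw [spreadIntegrand, Real.exp_log (by positivity), exp_add, sub_sub, add_comm (Real.exp y)]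
  ring

lemma integrable_spreadIntegrand_fiber {a : ℂ} (ha : a.re < -1) (b : ℂ) (y : ℝ) :
    Integrable fun x => spreadIntegrand a b (x, y) := by
  simp_rw [spreadIntegrand_eq]
  exact (integrable_exp_mul_posPart_exp_sub_exp ha _).const_mul _

/-- The exponent `(a + 1) log (1 + e^y)` is written in the Beta shape `-(s + t) log (1 + e^y)`
with `s = b`, `t = -1 - a - b`. -/
lemma integral_spreadIntegrand_fiber {a : ℂ} (ha : a.re < -1) (b : ℂ) (y : ℝ) :
    ∫ x, spreadIntegrand a b (x, y)
      = exp (b * y - (b + (-1 - a - b)) * Real.log (1 + Real.exp y)) / (a * (a + 1)) := by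
  simp_rw [spreadIntegrand_eq]
  rw [integral_const_mul, integral_exp_mul_posPart_exp_sub_exp ha, mul_div_assoc', ← exp_add]
  ring_nf

lemma norm_spreadIntegrand (a b : ℂ) (p : ℝ × ℝ) :
    ‖spreadIntegrand a b p‖ = (spreadIntegrand a.re b.re p).re := by
  rw [spreadIntegrand, spreadIntegrand, ← ofReal_mul, ← ofReal_mul, ← ofReal_add,
    ← ofReal_exp, ← ofReal_mul, ofReal_re, norm_mul, norm_exp, norm_real,
    Real.norm_of_nonneg (le_max_right _ _)]
  simp

lemma continuous_spreadIntegrand (a b : ℂ) : Continuous (spreadIntegrand a b) := by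
  unfold spreadIntegrand
  fun_prop

theorem integrable_spreadIntegrand {a b : ℂ} (ha : a.re < -1) (hb : 0 < b.re)
    (hab : a.re + b.re < -1) :
    Integrable (spreadIntegrand a b) (volume.prod volume) := by
  refine (integrable_prod_iff' (continuous_spreadIntegrand a b).aestronglyMeasurable).mpr
    ⟨.of_forall (integrable_spreadIntegrand_fiber ha b), ?_⟩
  have ha' : (a.re : ℂ).re < -1 := by simpa
  have h_re (y : ℝ) : ∫ x, (spreadIntegrand a.re b.re (x, y)).re
      = (∫ x, spreadIntegrand a.re b.re (x, y)).re :=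
    integral_re (integrable_spreadIntegrand_fiber ha' _ y)
  simp_rw [norm_spreadIntegrand, h_re, integral_spreadIntegrand_fiber ha']
  refine ((integrable_exp_mul_sub_mul_log_one_add_exp ?_ ?_).div_const _).re
  · simpa
  · simp; linarith

lemma Complex.Gamma_one_sub_eq_mul_Gamma_neg_one_sub {a : ℂ} (ha₀ : a ≠ 0)
    (ha₁ : a + 1 ≠ 0) :
    Gamma (1 - a) = a * (a + 1) * Gamma (-1 - a) := by
  have h₁ := Gamma_add_one (-1 - a) (by rw [neg_sub_left, neg_ne_zero]; exact ha₁)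
  have h₂ := Gamma_add_one (-a) (neg_ne_zero.mpr ha₀)
  rw [show -1 - a + 1 = -a by ring] at h₁
  rw [show -a + 1 = 1 - a by ring] at h₂
  rw [h₂, h₁]
  ring

theorem integral_spreadIntegrand {a b : ℂ} (ha : a.re < -1) (hb : 0 < b.re)
    (hab : a.re + b.re < -1) :
    ∫ p, spreadIntegrand a b p ∂(volume.prod volume)
      = Gamma (-1 - a - b) * Gamma b / Gamma (1 - a) := by
  have ha₀ : a ≠ 0 := by rintro rfl; norm_num at ha
  have ha₁ : a + 1 ≠ 0 := by intro h; have := congrArg re h; simp at this; linarith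
  have hab' : 0 < (-1 - a - b).re := by simp; linarith
  rw [integral_prod_symm _ (integrable_spreadIntegrand ha hb hab)]
  simp_rw [integral_spreadIntegrand_fiber ha]
  rw [integral_div, integral_exp_mul_sub_mul_log_one_add_exp,
    betaIntegral_eq_Gamma_mul_div _ _ hb hab', Gamma_one_sub_eq_mul_Gamma_neg_one_sub ha₀ ha₁,
    show b + (-1 - a - b) = -1 - a by ring]
  have hΓ : Gamma (-1 - a) ≠ 0 := Gamma_ne_zero_of_re_pos (by simp; linarith)
  field_simp

/-- The two-dimensional Fourier transform of the spread payoff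
`P(x1,x2) = (e^{x1} − e^{x2} − 1)_+` along the shifted contour
`(u1 + iε1, u2 + iε2)` with ε2 > 0 and ε1 + ε2 < −1 equals
`Γ(i(z1+z2) − 1) Γ(−i z2) / Γ(i z1 + 1)` where z = u + iε. -/
theorem spread_payoff_fourier_transform (u1 u2 ε1 ε2 : ℝ)
    (hε2 : 0 < ε2) (hε : ε1 + ε2 < -1) :
    (∫ x : ℝ × ℝ,
        Complex.exp (-Complex.I * (((u1 : ℂ) + Complex.I * ε1) * (x.1 : ℂ)
            + ((u2 : ℂ) + Complex.I * ε2) * (x.2 : ℂ)))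
          * (max (Real.exp x.1 - Real.exp x.2 - 1) 0 : ℝ))
      = Complex.Gamma (Complex.I * (((u1 : ℂ) + Complex.I * ε1) + ((u2 : ℂ) + Complex.I * ε2)) - 1)
          * Complex.Gamma (-Complex.I * ((u2 : ℂ) + Complex.I * ε2))
          / Complex.Gamma (Complex.I * ((u1 : ℂ) + Complex.I * ε1) + 1) := by
  set z₁ : ℂ := u1 + I * ε1
  set z₂ : ℂ := u2 + I * ε2
  have key := integral_spreadIntegrand (a := -I * z₁) (b := -I * z₂)
    (by simp [z₁]; linarith) (by simpa [z₂]) (by simp [z₁, z₂]; linarith)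
  have h_integrand : (fun x : ℝ × ℝ => exp (-I * (z₁ * x.1 + z₂ * x.2))
      * (max (Real.exp x.1 - Real.exp x.2 - 1) 0 : ℝ))
        = spreadIntegrand (-I * z₁) (-I * z₂) := by
    ext x
    rw [spreadIntegrand, mul_add, mul_assoc, mul_assoc]
  rw [h_integrand, Measure.volume_eq_prod, key,
    show -1 - -I * z₁ - -I * z₂ = I * (z₁ + z₂) - 1 by ring,
    show 1 - -I * z₁ = I * z₁ + 1 by ring]
end

section
/- Let ζ, ω, θ ∈ ℂ with θ ≠ 0 and set γ = √(ω² − 2θ²ζ) (a square root with γ ≠ 0 and 2γ ≠ (γ−ω)(1−e^{−γs}) for s ∈ [0, T]). Then D(s) = 2ζ(1 − e^{−γ s}) / (2γ − (γ − ω)(1 − e^{−γ s})) solves the Riccati ODE D'(s) = ζ − ω D(s) + ½ θ² D(s)² with initial condition D(0) = 0 on [0, T]. -/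
open Complex

/-! With `u = 1 - e^{-γs}`, which satisfies `u' = γ(1 - u)`, the function `D` is the Möbius
transform `2ζu / (2γ - (γ - ω)u)`, and the quotient rule gives
`D' = 4ζγ²(1 - u) / (2γ - (γ - ω)u)²`. The Riccati right-hand side `ζ - ωD + ½θ²D²` reduces to
the same quotient once `2θ²ζ` is replaced by `ω² - γ²`. -/

theorem hasDerivAt_riccati_quotient (ζ ω γ : ℂ) {s : ℝ}
    (hM : 2 * γ - (γ - ω) * (1 - cexp (-γ * s)) ≠ 0) :
    HasDerivAt
      (fun t : ℝ => 2 * ζ * (1 - cexp (-γ * t)) / (2 * γ - (γ - ω) * (1 - cexp (-γ * t))))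
      (4 * ζ * γ ^ 2 * cexp (-γ * s) / (2 * γ - (γ - ω) * (1 - cexp (-γ * s))) ^ 2) s := by
  have hu : HasDerivAt (fun t : ℝ => 1 - cexp (-γ * t)) (γ * cexp (-γ * s)) s := by
    simpa [mul_comm] using ((hasDerivAt_id (s : ℂ)).const_mul (-γ)).cexp.comp_ofReal.const_sub 1
  exact ((hu.const_mul (2 * ζ)).fun_div ((hu.const_mul (γ - ω)).const_sub (2 * γ)) hM).congr_deriv
    (by ring)

theorem riccati_rhs_eq_of_sq_eq {K : Type*} [Field K] [NeZero (2 : K)] {ζ ω θ γ : K}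
    (hγsq : γ ^ 2 = ω ^ 2 - 2 * θ ^ 2 * ζ) {e : K} (hM : 2 * γ - (γ - ω) * (1 - e) ≠ 0) :
    let D := 2 * ζ * (1 - e) / (2 * γ - (γ - ω) * (1 - e))
    ζ - ω * D + 1 / 2 * θ ^ 2 * D ^ 2 = 4 * ζ * γ ^ 2 * e / (2 * γ - (γ - ω) * (1 - e)) ^ 2 := by
  intro D
  simp only [D]
  -- `field_simp` only clears the denominator once it is an atom
  generalize hMdef : 2 * γ - (γ - ω) * (1 - e) = M at hM ⊢
  field_simp
  subst hMdef
  linear_combination ζ * (1 - e) ^ 2 * hγsq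

theorem riccati_explicit_solution_general (ζ ω θ γ : ℂ) (T : ℝ)
    (hγsq : γ^2 = ω^2 - 2 * θ^2 * ζ)
    (hden : ∀ s ∈ Set.Icc (0 : ℝ) T,
      2 * γ - (γ - ω) * (1 - Complex.exp (-γ * s)) ≠ 0) :
    let D : ℝ → ℂ := fun s =>
      2 * ζ * (1 - Complex.exp (-γ * s)) / (2 * γ - (γ - ω) * (1 - Complex.exp (-γ * s)))
    D 0 = 0 ∧
      ∀ s ∈ Set.Icc (0 : ℝ) T,
        HasDerivAt D (ζ - ω * D s + (1/2) * θ^2 * (D s)^2) s := by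
  refine ⟨by simp, fun s hs => ?_⟩
  rw [riccati_rhs_eq_of_sq_eq hγsq (hden s hs)]
  exact hasDerivAt_riccati_quotient ζ ω γ (hden s hs)

/-- The explicit function `D(s) = 2ζ(1 − e^{−γs}) / (2γ − (γ−ω)(1 − e^{−γs}))` solves
the Riccati ODE `D' = ζ − ωD + ½θ²D²`, `D(0) = 0`, on `[0,T]`, where
`γ² = ω² − 2θ²ζ`, provided γ ≠ 0 and the denominator does not vanish on `[0,T]`. -/
theorem riccati_explicit_solution (ζ ω θ γ : ℂ) (T : ℝ) (hθ : θ ≠ 0) (hγ : γ ≠ 0)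
    (hγsq : γ^2 = ω^2 - 2 * θ^2 * ζ)
    (hden : ∀ s ∈ Set.Icc (0 : ℝ) T,
      2 * γ - (γ - ω) * (1 - Complex.exp (-γ * s)) ≠ 0) :
    let D : ℝ → ℂ := fun s =>
      2 * ζ * (1 - Complex.exp (-γ * s)) / (2 * γ - (γ - ω) * (1 - Complex.exp (-γ * s)))
    D 0 = 0 ∧
      ∀ s ∈ Set.Icc (0 : ℝ) T,
        HasDerivAt D (ζ - ω * D s + (1/2) * θ^2 * (D s)^2) s :=
  riccati_explicit_solution_general ζ ω θ γ T hγsq hden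
end

section
/- Let H(x1, x2) = (e^{x1} − e^{x2} − 1)_+. For ε = (ε1, ε2) with ε2 > 0 and ε1 + ε2 < −1, the damped payoff e^{ε·x} H(x) is absolutely integrable over ℝ². -/
/-!
The payoff vanishes unless `x₁ > 0` and `x₂ < x₁`, and there it is at most `e^{x₁}`, so the
integrand is bounded by `e^{(ε₁+1)x₁ + ε₂x₂}`. On that wedge the exponent is at most
`-b|x₁| - b|x₂|` for `b = min (-(ε₁+ε₂+1)/2) ε₂ > 0`, and `e^{-b|x₁|} e^{-b|x₂|}` is an
integrable product of one-dimensional Laplace densities.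
-/

open Real MeasureTheory

lemma integrable_exp_neg_mul_abs {b : ℝ} (hb : 0 < b) :
    Integrable (fun x : ℝ => exp (-b * |x|)) := by
  rw [← integrableOn_univ, ← Set.Iio_union_Ici (a := (0 : ℝ)), integrableOn_union,
    integrableOn_Ici_iff_integrableOn_Ioi]
  have hIoi : IntegrableOn (fun x : ℝ => exp (-b * |x|)) (Set.Ioi 0) := by
    refine (exp_neg_integrableOn_Ioi 0 hb).congr_fun (fun x hx => ?_) measurableSet_Ioi
    simp [abs_of_pos (Set.mem_Ioi.mp hx)]
  refine ⟨?_, hIoi⟩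
  rw [← (Measure.measurePreserving_neg (volume : Measure ℝ)).integrableOn_comp_preimage
      (Homeomorph.neg ℝ).measurableEmbedding]
  simpa only [Function.comp_def, abs_neg, Set.neg_preimage, Set.neg_Iio, neg_zero] using hIoi

lemma pos_and_lt_of_exp_sub_exp_sub_one_pos {x₁ x₂ : ℝ} (h : 0 < exp x₁ - exp x₂ - 1) :
    0 < x₁ ∧ x₂ < x₁ := by
  have h₂ := exp_pos x₂
  exact ⟨one_lt_exp_iff.mp (by linarith), exp_lt_exp.mp (by linarith)⟩

lemma damping_exponent_le {ε₁ ε₂ b x₁ x₂ : ℝ} (hb : 0 ≤ b) (hbε₂ : b ≤ ε₂)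
    (hbε : 2 * b ≤ -(ε₁ + ε₂ + 1)) (h₁ : 0 < x₁) (h₂ : x₂ < x₁) :
    ε₁ * x₁ + ε₂ * x₂ + x₁ ≤ -b * |x₁| + -b * |x₂| := by
  rw [abs_of_pos h₁]
  rcases abs_cases x₂ with ⟨hx, hx₂⟩ | ⟨hx, hx₂⟩ <;> rw [hx] <;> nlinarith

lemma damped_spread_payoff_le {ε₁ ε₂ b : ℝ} (hb : 0 ≤ b) (hbε₂ : b ≤ ε₂)
    (hbε : 2 * b ≤ -(ε₁ + ε₂ + 1)) (x : ℝ × ℝ) :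
    exp (ε₁ * x.1 + ε₂ * x.2) * max (exp x.1 - exp x.2 - 1) 0
      ≤ exp (-b * |x.1|) * exp (-b * |x.2|) := by
  rcases le_or_gt (exp x.1 - exp x.2 - 1) 0 with hH | hH
  · rw [max_eq_right hH, mul_zero]
    positivity
  obtain ⟨h₁, h₂⟩ := pos_and_lt_of_exp_sub_exp_sub_one_pos hH
  calc exp (ε₁ * x.1 + ε₂ * x.2) * max (exp x.1 - exp x.2 - 1) 0
      ≤ exp (ε₁ * x.1 + ε₂ * x.2) * exp x.1 := by
        gcongr
        exact max_le (by linarith [exp_pos x.2]) (exp_pos _).le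
    _ = exp (ε₁ * x.1 + ε₂ * x.2 + x.1) := (exp_add _ _).symm
    _ ≤ exp (-b * |x.1| + -b * |x.2|) := exp_le_exp.mpr (damping_exponent_le hb hbε₂ hbε h₁ h₂)
    _ = exp (-b * |x.1|) * exp (-b * |x.2|) := exp_add _ _

/-- For ε = (ε1, ε2) with ε2 > 0 and ε1 + ε2 < −1, the damped spread payoff
`e^{ε·x} (e^{x1} − e^{x2} − 1)_+` is absolutely integrable over ℝ². -/
theorem damped_spread_payoff_integrable (ε1 ε2 : ℝ) (hε2 : 0 < ε2) (hε : ε1 + ε2 < -1) :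
    Integrable
      (fun x : ℝ × ℝ => Real.exp (ε1 * x.1 + ε2 * x.2) * max (Real.exp x.1 - Real.exp x.2 - 1) 0)
      (volume : Measure (ℝ × ℝ)) := by
  set b := min (-(ε1 + ε2 + 1) / 2) ε2
  have hb : 0 < b := lt_min (by linarith) hε2
  have hbε : 2 * b ≤ -(ε1 + ε2 + 1) := by linarith [min_le_left (-(ε1 + ε2 + 1) / 2) ε2]
  have hdom : Integrable (fun x : ℝ × ℝ => exp (-b * |x.1|) * exp (-b * |x.2|)) := by
    rw [Measure.volume_eq_prod]
    exact (integrable_exp_neg_mul_abs hb).mul_prod (integrable_exp_neg_mul_abs hb)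
  refine hdom.mono' (Continuous.aestronglyMeasurable (by fun_prop)) (ae_of_all _ fun x => ?_)
  rw [norm_of_nonneg (by positivity)]
  exact damped_spread_payoff_le hb.le (min_le_right _ _) hbε x
end

section
/- For u1 = u2 = 0 and damping ε = (ε1, ε2) with ε2 > 0, ε1 + ε2 < −1, the value Γ(−(ε1+ε2) − 1)Γ(ε2)/Γ(−ε1 + 1) equals the double integral ∫∫_{ℝ²} e^{ε1 x1 + ε2 x2}(e^{x1} − e^{x2} − 1)_+ dx1 dx2, i.e., the Hurd–Zhou formula evaluated at the purely imaginary contour point. -/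
open Real MeasureTheory Set Filter intervalIntegral

lemma exp_mul_hasDerivAt (p x : ℝ) (hp : p ≠ 0) :
    HasDerivAt (fun t : ℝ => Real.exp (p * t) / p) (Real.exp (p * x)) x := by
  have h := (((Real.hasDerivAt_exp (p * x)).comp x ((hasDerivAt_id x).const_mul p)).div_const p)
  simpa [mul_comm, mul_div_assoc, mul_div_cancel_left₀, hp] using h

lemma intervalIntegral_exp_mul (p y c : ℝ) (hp : p ≠ 0) :
    ∫ x in y..c, Real.exp (p * x) = (Real.exp (p * c) - Real.exp (p * y)) / p := by
  rw [intervalIntegral.integral_eq_sub_of_hasDerivAt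
    (fun x _ => exp_mul_hasDerivAt p x hp)
    ((Real.continuous_exp.comp (continuous_const.mul continuous_id)).intervalIntegrable y c)]
  ring

lemma integrableOn_exp_mul_Iic' (p c : ℝ) (hp : 0 < p) :
    IntegrableOn (fun x => Real.exp (p * x)) (Iic c) := by
  refine integrableOn_Iic_of_intervalIntegral_norm_bounded (Real.exp (p * c) / p) c
    (fun y => ((Real.continuous_exp.comp
      (continuous_const.mul continuous_id)).intervalIntegrable _ _).1) tendsto_id
    (eventually_of_mem (Iic_mem_atBot c) fun y (hy : y ≤ c) => ?_)
  have heq : (∫ x in y..c, ‖Real.exp (p * x)‖) = (Real.exp (p * c) - Real.exp (p * y)) / p := by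
    rw [← intervalIntegral_exp_mul p y c hp.ne']
    refine intervalIntegral.integral_congr fun x _ => norm_of_nonneg (Real.exp_pos _).le
  rw [id_eq, heq]
  rw [div_le_div_iff_of_pos_right hp]
  linarith [(Real.exp_pos (p * y)).le]

lemma integral_exp_mul_Iic' (p c : ℝ) (hp : 0 < p) :
    ∫ x in Iic c, Real.exp (p * x) = Real.exp (p * c) / p := by
  have h := integral_Iic_of_hasDerivAt_of_tendsto'
    (f := fun t : ℝ => Real.exp (p * t) / p) (f' := fun x => Real.exp (p * x)) (a := c) (m := 0)
    (fun x _ => exp_mul_hasDerivAt p x hp.ne') (integrableOn_exp_mul_Iic' p c hp) ?_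
  · simpa using h
  · have : Tendsto (fun t : ℝ => p * t) atBot atBot :=
      (tendsto_const_mul_atBot_of_pos hp).mpr tendsto_id
    simpa using ((Real.tendsto_exp_atBot.comp this).div_const p)

lemma betaIntegrand_ofReal {u v x : ℝ} (hx : x ∈ Set.Ioo (0:ℝ) 1) :
    ((x : ℂ) ^ ((u:ℂ) - 1) * ((1:ℂ) - x) ^ ((v:ℂ) - 1))
      = ((x ^ (u-1) * (1-x) ^ (v-1) : ℝ) : ℂ) := by
  rw [Complex.ofReal_mul, Complex.ofReal_cpow hx.1.le, Complex.ofReal_cpow (by linarith [hx.2] : (0:ℝ) ≤ 1 - x)]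
  push_cast
  ring_nf

lemma integrableOn_betaIntegrand {u v : ℝ} (hu : 0 < u) (hv : 0 < v) :
    IntegrableOn (fun x : ℝ => x ^ (u-1) * (1-x) ^ (v-1)) (Set.Ioo (0:ℝ) 1) := by
  have h := (Complex.betaIntegral_convergent (u := (u:ℂ)) (v := (v:ℂ))
    (by simpa using hu) (by simpa using hv)).1
  have h2 : IntegrableOn (fun x : ℝ =>
      ((x:ℂ) ^ ((u:ℂ)-1) * ((1:ℂ)-x) ^ ((v:ℂ)-1))) (Set.Ioo (0:ℝ) 1) := by
    simpa using h.mono_set Set.Ioo_subset_Ioc_self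
  have h3 : IntegrableOn (fun x : ℝ =>
      ‖(x:ℂ) ^ ((u:ℂ)-1) * ((1:ℂ)-x) ^ ((v:ℂ)-1)‖) (Set.Ioo (0:ℝ) 1) := h2.norm
  refine h3.congr_fun (fun x hx => ?_) measurableSet_Ioo
  dsimp only
  rw [betaIntegrand_ofReal hx, Complex.norm_real, Real.norm_of_nonneg
    (mul_nonneg (Real.rpow_nonneg hx.1.le _)
      (Real.rpow_nonneg (by linarith [hx.2] : (0:ℝ) ≤ 1 - x) _))]

lemma real_betaIntegral {u v : ℝ} (hu : 0 < u) (hv : 0 < v) :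
    ∫ x in Set.Ioo (0:ℝ) 1, x ^ (u-1) * (1-x) ^ (v-1)
      = Real.Gamma u * Real.Gamma v / Real.Gamma (u+v) := by
  have hβ : Complex.betaIntegral (u:ℂ) (v:ℂ)
      = ((∫ x in Set.Ioo (0:ℝ) 1, x ^ (u-1) * (1-x) ^ (v-1) : ℝ) : ℂ) := by
    have h1 : Complex.betaIntegral (u:ℂ) (v:ℂ)
        = ∫ x in Set.Ioo (0:ℝ) 1, ((x ^ (u-1) * (1-x) ^ (v-1) : ℝ) : ℂ) := by
      rw [Complex.betaIntegral, intervalIntegral.integral_of_le zero_le_one,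
        MeasureTheory.integral_Ioc_eq_integral_Ioo]
      exact setIntegral_congr_fun measurableSet_Ioo fun x hx => betaIntegrand_ofReal hx
    rw [h1]
    exact _root_.integral_ofReal
  have hG := Complex.Gamma_mul_Gamma_eq_betaIntegral
    (s := (u:ℂ)) (t := (v:ℂ)) (by simpa using hu) (by simpa using hv)
  rw [hβ, ← Complex.ofReal_add, Complex.Gamma_ofReal, Complex.Gamma_ofReal,
    Complex.Gamma_ofReal, ← Complex.ofReal_mul, ← Complex.ofReal_mul] at hG
  have hG' : Real.Gamma u * Real.Gamma v
      = Real.Gamma (u+v) * ∫ x in Set.Ioo (0:ℝ) 1, x ^ (u-1) * (1-x) ^ (v-1) := by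
    exact_mod_cast hG
  have hne : Real.Gamma (u+v) ≠ 0 := (Real.Gamma_pos_of_pos (by linarith)).ne'
  rw [hG']
  field_simp

lemma exp_neg_image : (fun x : ℝ => Real.exp (-x)) '' Set.Ioi 0 = Set.Ioo 0 1 := by
  ext y
  constructor
  · rintro ⟨x, hx, rfl⟩
    exact ⟨Real.exp_pos _, by
      rw [Real.exp_lt_one_iff]; simpa using hx⟩
  · rintro ⟨h0, h1⟩
    exact ⟨-Real.log y, by simpa using Real.log_neg h0 h1, by simp [Real.exp_log h0]⟩

lemma exp_neg_inj : Set.InjOn (fun x : ℝ => Real.exp (-x)) (Set.Ioi 0) := fun a _ b _ h => by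
  have := Real.exp_injective h
  linarith [neg_injective this]

lemma exp_neg_derivWithin (x : ℝ) :
    HasDerivWithinAt (fun x : ℝ => Real.exp (-x)) (-Real.exp (-x)) (Set.Ioi 0) x := by
  have h : HasDerivAt (fun x : ℝ => Real.exp (-x)) (Real.exp (-x) * (-1)) x :=
    (Real.hasDerivAt_exp (-x)).comp x (hasDerivAt_neg x)
  simpa using h.hasDerivWithinAt

lemma substitution_congr (ε1 ε2 : ℝ) (hε2 : 0 < ε2) (hε : ε1 + ε2 < -1) (x : ℝ) (hx : x ∈ Set.Ioi (0:ℝ)) :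
    |(-Real.exp (-x))| • ((Real.exp (-x)) ^ ((-ε1-ε2-1)-1) * (1-Real.exp (-x)) ^ ((ε2+2)-1))
      = Real.exp (ε1 * x) * (Real.exp x - 1) ^ (ε2+1) := by
  have hx0 : (0:ℝ) < x := hx
  have ht : (0:ℝ) < Real.exp (-x) := Real.exp_pos _
  have hA : (0:ℝ) < Real.exp x - 1 := by
    nlinarith [Real.add_one_le_exp x]
  have h1t : 1 - Real.exp (-x) = Real.exp (-x) * (Real.exp x - 1) := by
    rw [mul_sub, ← Real.exp_add, mul_one]
    simp
  rw [abs_neg, abs_of_pos ht, smul_eq_mul, h1t,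
    Real.mul_rpow ht.le hA.le,
    Real.rpow_def_of_pos ht, Real.rpow_def_of_pos ht, Real.log_exp,
    show (ε2+2)-1 = ε2+1 by ring]
  calc Real.exp (-x) * (Real.exp (-x * (-ε1 - ε2 - 1 - 1)) *
        (Real.exp (-x * (ε2 + 1)) * (Real.exp x - 1) ^ (ε2 + 1)))
      = (Real.exp (-x) * Real.exp (-x * (-ε1 - ε2 - 1 - 1)) * Real.exp (-x * (ε2 + 1)))
          * (Real.exp x - 1) ^ (ε2 + 1) := by ring
    _ = Real.exp (ε1 * x) * (Real.exp x - 1) ^ (ε2 + 1) := by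
        rw [← Real.exp_add, ← Real.exp_add]
        ring_nf

section
variable (ε1 ε2 : ℝ) (hε2 : 0 < ε2)

lemma slice_eq_zero {x : ℝ} (hx : x ≤ 0) (y : ℝ) :
    Real.exp (ε1 * x + ε2 * y) * max (Real.exp x - Real.exp y - 1) 0 = 0 := by
  have h1 : Real.exp x ≤ 1 := Real.exp_le_one_iff.mpr hx
  have h2 : Real.exp x - Real.exp y - 1 ≤ 0 := by linarith [Real.exp_pos y]
  rw [max_eq_right h2, mul_zero]

lemma slice_eq_indicator {x : ℝ} (hx : 0 < x) :
    (fun y => Real.exp (ε1 * x + ε2 * y) * max (Real.exp x - Real.exp y - 1) 0)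
      = Set.indicator (Iic (Real.log (Real.exp x - 1)))
        (fun y => Real.exp (ε1 * x) *
          ((Real.exp x - 1) * Real.exp (ε2 * y) - Real.exp ((ε2+1) * y))) := by
  have hA : (0:ℝ) < Real.exp x - 1 := by nlinarith [Real.add_one_le_exp x]
  funext y
  by_cases hy : y ≤ Real.log (Real.exp x - 1)
  · have hey : Real.exp y ≤ Real.exp x - 1 := (Real.exp_le_exp.mpr hy).trans_eq
      (Real.exp_log hA)
    rw [Set.indicator_of_mem (show y ∈ Iic (Real.log (Real.exp x - 1)) from hy), max_eq_left (by linarith)]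
    rw [Real.exp_add, show (ε2+1) * y = ε2 * y + y by ring, Real.exp_add]
    ring
  · push_neg at hy
    have hey : Real.exp x - 1 < Real.exp y := by
      rw [← Real.exp_log hA]; exact Real.exp_lt_exp.mpr hy
    rw [Set.indicator_of_notMem (show y ∉ Iic (Real.log (Real.exp x - 1)) by simpa using hy), max_eq_right (by linarith), mul_zero]

include hε2 in
lemma slice_integrable (x : ℝ) :
    Integrable (fun y => Real.exp (ε1 * x + ε2 * y) *
      max (Real.exp x - Real.exp y - 1) 0) := by
  rcases le_or_gt x 0 with hx | hx
  · simp only [funext (slice_eq_zero ε1 ε2 hx)]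
    exact integrable_zero _ _ _
  · rw [slice_eq_indicator ε1 ε2 hx]
    refine IntegrableOn.integrable_indicator ?_ measurableSet_Iic
    exact (((integrableOn_exp_mul_Iic' ε2 _ hε2).const_mul _).sub
      (integrableOn_exp_mul_Iic' (ε2+1) _ (by linarith))).const_mul _

include hε2 in
lemma slice_integral (x : ℝ) :
    ∫ y, Real.exp (ε1 * x + ε2 * y) * max (Real.exp x - Real.exp y - 1) 0
      = Set.indicator (Ioi 0)
        (fun x => Real.exp (ε1 * x) * (Real.exp x - 1) ^ (ε2+1) * (ε2 * (ε2+1))⁻¹) x := by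
  rcases le_or_gt x 0 with hx | hx
  · rw [Set.indicator_of_notMem (by simpa using hx)]
    simp only [funext (slice_eq_zero ε1 ε2 hx)]
    exact integral_zero _ _
  · have hA : (0:ℝ) < Real.exp x - 1 := by nlinarith [Real.add_one_le_exp x]
    set c := Real.log (Real.exp x - 1) with hc
    rw [Set.indicator_of_mem (by simpa using hx), slice_eq_indicator ε1 ε2 hx,
      MeasureTheory.integral_indicator measurableSet_Iic]
    rw [MeasureTheory.integral_const_mul, integral_sub ((integrableOn_exp_mul_Iic' ε2 _ hε2).const_mul _)
      (integrableOn_exp_mul_Iic' (ε2+1) _ (by linarith)),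
      MeasureTheory.integral_const_mul, integral_exp_mul_Iic' ε2 c hε2,
      integral_exp_mul_Iic' (ε2+1) c (by linarith)]
    have h1 : Real.exp (ε2 * c) = (Real.exp x - 1) ^ ε2 := by
      rw [Real.rpow_def_of_pos hA, mul_comm]
    have h2 : Real.exp ((ε2+1) * c) = (Real.exp x - 1) ^ (ε2+1) := by
      rw [Real.rpow_def_of_pos hA, mul_comm]
    rw [h1, h2]
    have h3 : (Real.exp x - 1) * (Real.exp x - 1) ^ ε2 = (Real.exp x - 1) ^ (ε2+1) := by
      rw [Real.rpow_add_one hA.ne']; ring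
    rw [show (Real.exp x - 1) * ((Real.exp x - 1) ^ ε2 / ε2)
      = ((Real.exp x - 1) * (Real.exp x - 1) ^ ε2) / ε2 by ring, h3]
    field_simp
    ring

end

/-- The Hurd–Zhou formula evaluated at the purely imaginary contour point: for ε2 > 0 and
ε1 + ε2 < −1, the damped integral of the spread payoff equals the Gamma-ratio
`Γ(−(ε1+ε2) − 1) Γ(ε2) / Γ(−ε1 + 1)`. -/
theorem spread_payoff_real_gamma_integral (ε1 ε2 : ℝ) (hε2 : 0 < ε2) (hε : ε1 + ε2 < -1) :
    ∫ x : ℝ × ℝ, Real.exp (ε1 * x.1 + ε2 * x.2) * max (Real.exp x.1 - Real.exp x.2 - 1) 0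
      = Real.Gamma (-(ε1 + ε2) - 1) * Real.Gamma ε2 / Real.Gamma (-ε1 + 1) := by
  have hu : (0:ℝ) < -ε1-ε2-1 := by linarith
  have hv : (0:ℝ) < ε2+2 := by linarith
  -- the outer integrand after integrating over x2
  set φ : ℝ → ℝ := fun x => Real.exp (ε1 * x) * (Real.exp x - 1) ^ (ε2+1) with hφdef
  -- change of variables: substitution facts
  have hsub_int : IntegrableOn φ (Set.Ioi 0) := by
    have h := (integrableOn_image_iff_integrableOn_abs_deriv_smul measurableSet_Ioi
      (fun x _ => exp_neg_derivWithin x) exp_neg_inj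
      (fun t => t ^ ((-ε1-ε2-1)-1) * (1-t) ^ ((ε2+2)-1))).mp
      (by rw [exp_neg_image]; exact integrableOn_betaIntegrand hu hv)
    exact h.congr_fun (fun x hx => substitution_congr ε1 ε2 hε2 hε x hx) measurableSet_Ioi
  have hsub_val : ∫ x in Set.Ioi (0:ℝ), φ x
      = Real.Gamma (-ε1-ε2-1) * Real.Gamma (ε2+2) / Real.Gamma ((-ε1-ε2-1)+(ε2+2)) := by
    rw [← real_betaIntegral hu hv, ← exp_neg_image,
      integral_image_eq_integral_abs_deriv_smul measurableSet_Ioi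
        (fun x _ => exp_neg_derivWithin x) exp_neg_inj]
    exact (setIntegral_congr_fun measurableSet_Ioi
      (fun x hx => substitution_congr ε1 ε2 hε2 hε x hx)).symm
  -- Fubini
  have hcont : Continuous (fun x : ℝ × ℝ =>
      Real.exp (ε1 * x.1 + ε2 * x.2) * max (Real.exp x.1 - Real.exp x.2 - 1) 0) := by
    fun_prop
  have hGint : Integrable (Set.indicator (Ioi (0:ℝ))
      (fun x => Real.exp (ε1 * x) * (Real.exp x - 1) ^ (ε2+1) * (ε2 * (ε2+1))⁻¹)) := by
    refine IntegrableOn.integrable_indicator ?_ measurableSet_Ioi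
    exact hsub_int.mul_const _
  have hInt : Integrable (fun x : ℝ × ℝ =>
      Real.exp (ε1 * x.1 + ε2 * x.2) * max (Real.exp x.1 - Real.exp x.2 - 1) 0)
      (volume.prod volume) := by
    rw [integrable_prod_iff (by rw [← Measure.volume_eq_prod]; exact hcont.aestronglyMeasurable)]
    constructor
    · exact ae_of_all _ fun x => slice_integrable ε1 ε2 hε2 x
    · have : (fun x : ℝ => ∫ y, ‖Real.exp (ε1 * x + ε2 * y) *
          max (Real.exp x - Real.exp y - 1) 0‖)
          = Set.indicator (Ioi (0:ℝ))
            (fun x => Real.exp (ε1 * x) * (Real.exp x - 1) ^ (ε2+1) * (ε2 * (ε2+1))⁻¹) := by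
        funext x
        rw [← slice_integral ε1 ε2 hε2 x]
        exact integral_congr_ae (ae_of_all _ fun y => norm_of_nonneg
          (mul_nonneg (Real.exp_pos _).le (le_max_right _ _)))
      rw [this]
      exact hGint
  have hmain : ∫ x : ℝ × ℝ, Real.exp (ε1 * x.1 + ε2 * x.2) *
      max (Real.exp x.1 - Real.exp x.2 - 1) 0
      = (∫ x in Set.Ioi (0:ℝ), φ x) * (ε2 * (ε2+1))⁻¹ := by
    rw [Measure.volume_eq_prod, MeasureTheory.integral_prod _ hInt]
    simp_rw [slice_integral ε1 ε2 hε2]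
    rw [MeasureTheory.integral_indicator measurableSet_Ioi, ← MeasureTheory.integral_mul_const]
  rw [hmain, hsub_val]
  -- Gamma algebra
  have h1 : Real.Gamma (ε2+2) = (ε2+1) * (ε2 * Real.Gamma ε2) := by
    rw [show ε2+2 = (ε2+1)+1 by ring, Real.Gamma_add_one (by linarith),
      Real.Gamma_add_one hε2.ne']
  have h2 : (-ε1-ε2-1) + (ε2+2) = -ε1+1 := by ring
  have h3 : -(ε1+ε2) - 1 = -ε1-ε2-1 := by ring
  have h4 : Real.Gamma (-ε1+1) ≠ 0 := (Real.Gamma_pos_of_pos (by linarith)).ne'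
  rw [h2, h3, h1]
  have h5 : ε2 + 1 ≠ 0 := by linarith
  field_simp
end
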